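/- arXiv:1911.11096 — 2 statements merged into one kernel-verified Lean document; each statement's English description precedes it below -/
import Mathlib

section
/- The Gaussian solitary wave ϱ_c(x) = exp(1/2 + (1−c²)/p)·exp(−px²/4) satisfies the energy identity −(ϱ_c')²/2 + ((1−c²)/2 + p/4)ϱ_c² − (p/2)(log ϱ_c)ϱ_c² = 0 for all x ∈ ℝ. -/
/-!
For `ϱ(x) = exp a · exp (-q x² / 4)` one has `ϱ' = -(q x / 2) ϱ` and `log ϱ = a - q x² / 4`, so the
`x²`-terms of `ℋ(ϱ, ϱ')` cancel and `ℋ(ϱ, ϱ') = ((1 - c²)/2 + q/4 - q a / 2) ϱ²`, which vanishes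
exactly for the amplitude exponent `a = 1/2 + (1 - c²)/q`.
-/

open Real

noncomputable section

/-- The conserved quantity `ℋ(φ, ξ)` of the logarithmic travelling-wave ODE with speed `c`. -/
def logHamiltonian (c q φ ξ : ℝ) : ℝ :=
  -ξ ^ 2 / 2 + ((1 - c ^ 2) / 2 + q / 4) * φ ^ 2 - (q / 2) * log φ * φ ^ 2

def gaussianWave (a q x : ℝ) : ℝ := exp a * exp (-q * x ^ 2 / 4)

theorem hasDerivAt_gaussianWave (a q x : ℝ) :
    HasDerivAt (gaussianWave a q) (-(q * x / 2) * gaussianWave a q x) x := by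
  have hexponent : HasDerivAt (fun y : ℝ => -q * y ^ 2 / 4) (-(q * x / 2)) x := by
    refine (((hasDerivAt_pow 2 x).const_mul (-q)).div_const 4).congr_deriv ?_
    norm_num
    ring
  exact (hexponent.exp.const_mul (exp a)).congr_deriv (by rw [gaussianWave]; ring)

theorem log_gaussianWave (a q x : ℝ) : log (gaussianWave a q x) = a - q * x ^ 2 / 4 := by
  rw [gaussianWave, ← exp_add, log_exp]
  ring

theorem logHamiltonian_gaussianWave (c q x : ℝ) (hq : q ≠ 0) :
    logHamiltonian c q (gaussianWave (1 / 2 + (1 - c ^ 2) / q) q x)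
      (deriv (gaussianWave (1 / 2 + (1 - c ^ 2) / q) q) x) = 0 := by
  rw [logHamiltonian, (hasDerivAt_gaussianWave _ q x).deriv, log_gaussianWave]
  field_simp
  ring

/-- The Gaussian solitary wave `ϱ_c(x) = exp(1/2 + (1−c²)/p) exp(−px²/4)`
satisfies the energy identity
`−(ϱ_c')²/2 + ((1−c²)/2 + p/4)ϱ_c² − (p/2)(log ϱ_c)ϱ_c² = 0` for all `x`. -/
theorem stmt10 (c : ℝ) (p : ℕ) (hp : 0 < p) :
    ∀ x : ℝ,
      -(deriv (fun y : ℝ =>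
          Real.exp (1/2 + (1 - c^2)/(p : ℝ)) * Real.exp (-(p : ℝ) * y^2 / 4)) x)^2 / 2 +
        ((1 - c^2)/2 + (p : ℝ)/4) *
          (Real.exp (1/2 + (1 - c^2)/(p : ℝ)) * Real.exp (-(p : ℝ) * x^2 / 4))^2 -
        ((p : ℝ)/2) * Real.log (Real.exp (1/2 + (1 - c^2)/(p : ℝ)) *
            Real.exp (-(p : ℝ) * x^2 / 4)) *
          (Real.exp (1/2 + (1 - c^2)/(p : ℝ)) * Real.exp (-(p : ℝ) * x^2 / 4))^2 = 0 :=
  fun x => logHamiltonian_gaussianWave c p x (Nat.cast_ne_zero.mpr hp.ne')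

end
end

section
/- Let p be a positive integer, c ∈ ℝ with c² < 1, and suppose c ↦ φ_c ∈ H² is a smooth curve of positive L-periodic solutions of φ_c'' − (1−c²)φ_c + p(log φ_c)φ_c = 0. Set η_c = dφ_c/dc. Then ∫₀ᴸ (2c φ_c² + p φ_c η_c) dx = 0, equivalently d/dc (∫₀ᴸ φ_c² dx) = −(4c/p) ∫₀ᴸ φ_c² dx. -/
set_option maxHeartbeats 1000000

open intervalIntegral MeasureTheory

/-- Differentiation under the interval integral for jointly continuous data. -/
lemma diff_under_integral (a b : ℝ) {G G' : ℝ → ℝ → ℝ}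
    (hG : Continuous fun q : ℝ × ℝ => G q.1 q.2)
    (hG' : Continuous fun q : ℝ × ℝ => G' q.1 q.2)
    (hd : ∀ s x, HasDerivAt (fun t => G t x) (G' s x) s) (c : ℝ) :
    HasDerivAt (fun s => ∫ x in a..b, G s x) (∫ x in a..b, G' c x) c := by
  obtain ⟨M, hM⟩ := ((isCompact_Icc (a := c - 1) (b := c + 1)).prod
    (isCompact_uIcc (a := a) (b := b))).exists_bound_of_continuousOn hG'.continuousOn
  have hGx : ∀ s, Continuous fun x => G s x := fun s =>
    hG.comp (continuous_const.prodMk continuous_id)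
  have hG'x : ∀ s, Continuous fun x => G' s x := fun s =>
    hG'.comp (continuous_const.prodMk continuous_id)
  refine (intervalIntegral.hasDerivAt_integral_of_dominated_loc_of_deriv_le
    (F := G) (F' := G') (bound := fun _ => M) (s := Metric.ball c 1) (Metric.ball_mem_nhds c one_pos) ?_ ?_ ?_ ?_ ?_ ?_).2
  · exact Filter.Eventually.of_forall fun s => (hGx s).aestronglyMeasurable
  · exact (hGx c).intervalIntegrable a b
  · exact (hG'x c).aestronglyMeasurable
  · refine Filter.Eventually.of_forall fun x hx s hs => ?_
    exact hM (s, x) ⟨⟨by linarith [abs_lt.1 (by simpa [Real.dist_eq] using mem_ball_iff_norm.1 hs)],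
      by linarith [abs_lt.1 (by simpa [Real.dist_eq] using mem_ball_iff_norm.1 hs)]⟩,
      Set.uIoc_subset_uIcc hx⟩
  · exact intervalIntegrable_const
  · exact Filter.Eventually.of_forall fun x _ s _ => hd s x

/-- Periodicity of the derivative. -/
lemma deriv_periodic {u : ℝ → ℝ} {L : ℝ} (hu : Differentiable ℝ u)
    (hup : ∀ x, u (x + L) = u x) (x : ℝ) : deriv u (x + L) = deriv u x := by
  have h1 : HasDerivAt (fun y => u (y + L)) (deriv u (x + L) * 1) x :=
    (hu (x + L)).hasDerivAt.comp x ((hasDerivAt_id x).add_const L)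
  have h2 : (fun y => u (y + L)) = u := funext fun y => hup y
  rw [h2, mul_one] at h1
  exact ((hu x).hasDerivAt.unique h1).symm

/-- Integration by parts twice for periodic smooth functions. -/
lemma ibp_periodic {L : ℝ} {u v : ℝ → ℝ} (hu : ContDiff ℝ (⊤ : ℕ∞) u)
    (hv : ContDiff ℝ (⊤ : ℕ∞) v)
    (hup : ∀ x, u (x + L) = u x) (hvp : ∀ x, v (x + L) = v x) :
    (∫ x in (0:ℝ)..L, (u x * deriv (deriv v) x - deriv (deriv u) x * v x)) = 0 := by
  have hud : ContDiff ℝ (⊤ : ℕ∞) (deriv u) := (contDiff_infty_iff_deriv.mp hu).2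
  have hvd : ContDiff ℝ (⊤ : ℕ∞) (deriv v) := (contDiff_infty_iff_deriv.mp hv).2
  set W := fun x => u x * deriv v x - deriv u x * v x with hW
  have hW' : ∀ x, HasDerivAt W (u x * deriv (deriv v) x - deriv (deriv u) x * v x) x := by
    intro x
    have h1 := (((contDiff_infty_iff_deriv.mp hu).1 x).hasDerivAt.mul
      ((contDiff_infty_iff_deriv.mp hvd).1 x).hasDerivAt).sub
      (((contDiff_infty_iff_deriv.mp hud).1 x).hasDerivAt.mul ((contDiff_infty_iff_deriv.mp hv).1 x).hasDerivAt)
    refine h1.congr_deriv ?_; ring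
  have hcont : Continuous fun x => u x * deriv (deriv v) x - deriv (deriv u) x * v x := by
    exact ((hu.continuous.mul (contDiff_infty_iff_deriv.mp hvd).2.continuous).sub
      ((contDiff_infty_iff_deriv.mp hud).2.continuous.mul hv.continuous))
  have key : (∫ x in (0:ℝ)..L, (u x * deriv (deriv v) x - deriv (deriv u) x * v x))
      = W L - W 0 :=
    intervalIntegral.integral_eq_sub_of_hasDerivAt (fun x _ => hW' x)
      (hcont.intervalIntegrable 0 L)
  rw [key, hW]
  have h0L : (0:ℝ) + L = L := zero_add L
  have e1 : u L = u 0 := by rw [← h0L, hup]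
  have e2 : v L = v 0 := by rw [← h0L, hvp]
  have e3 : deriv u L = deriv u 0 := by
    rw [← h0L]; exact deriv_periodic (contDiff_infty_iff_deriv.mp hu).1 hup 0
  have e4 : deriv v L = deriv v 0 := by
    rw [← h0L]; exact deriv_periodic (contDiff_infty_iff_deriv.mp hv).1 hvp 0
  simp only [e1, e2, e3, e4]; ring

/-- Differentiating the family of profile equations in `c`:
for a smooth curve `c ↦ φ_c` of positive `L`-periodic solutions of
`φ_c'' − (1−c²)φ_c + p(log φ_c)φ_c = 0`, setting `η = dφ_c/dc`, one has
`∫₀ᴸ (2c φ_c² + p φ_c η) dx = 0`, i.e.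
`d/dc ∫₀ᴸ φ_c² dx = −(4c/p) ∫₀ᴸ φ_c² dx`. -/
theorem stmt13 (p : ℕ) (hp : 0 < p) (L c : ℝ) (hL : 0 < L) (hc : c^2 < 1)
    (φ : ℝ → ℝ → ℝ)
    (hs : ContDiff ℝ (⊤ : ℕ∞) (fun q : ℝ × ℝ => φ q.1 q.2))
    (hpos : ∀ c' x, 0 < φ c' x)
    (hper : ∀ c' x, φ c' (x + L) = φ c' x)
    (heq : ∀ c' x, deriv (deriv (φ c')) x - (1 - c'^2) * φ c' x +
      (p : ℝ) * Real.log (φ c' x) * φ c' x = 0)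
    (η : ℝ → ℝ) (hη : ∀ x, HasDerivAt (fun s => φ s x) (η x) c) :
    (∫ x in (0:ℝ)..L, (2 * c * (φ c x)^2 + (p : ℝ) * φ c x * η x)) = 0 ∧
    HasDerivAt (fun s => ∫ x in (0:ℝ)..L, (φ s x)^2)
      (-(4 * c / (p : ℝ)) * ∫ x in (0:ℝ)..L, (φ c x)^2) c := by
  -- basic smoothness facts
  have hφs : ∀ s, ContDiff ℝ (⊤ : ℕ∞) (φ s) := fun s =>
    hs.comp (contDiff_const.prodMk contDiff_id)
  have hφcont : Continuous fun q : ℝ × ℝ => φ q.1 q.2 := hs.continuous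
  have hlog : ContDiff ℝ (⊤ : ℕ∞) fun q : ℝ × ℝ => Real.log (φ q.1 q.2) :=
    hs.log fun q => (hpos q.1 q.2).ne'
  -- the partial derivative in the first variable
  set D : ℝ → ℝ → ℝ := fun s x => fderiv ℝ (fun q : ℝ × ℝ => φ q.1 q.2) (s, x) (1, 0) with hD
  have hDd : ∀ s x, HasDerivAt (fun t => φ t x) (D s x) s := by
    intro s x
    have h1 : HasFDerivAt (fun q : ℝ × ℝ => φ q.1 q.2)
        (fderiv ℝ (fun q : ℝ × ℝ => φ q.1 q.2) (s, x)) (s, x) :=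
      (hs.differentiable (by simp) (s, x)).hasFDerivAt
    have h2 : HasDerivAt (fun t : ℝ => (t, x)) ((1 : ℝ), (0 : ℝ)) s := by
      have := (hasDerivAt_id s).prodMk (hasDerivAt_const s x)
      simpa using this
    exact h1.comp_hasDerivAt s h2
  have hDcont : Continuous fun q : ℝ × ℝ => D q.1 q.2 := by
    have h1 : Continuous (fun q : ℝ × ℝ => fderiv ℝ (fun q : ℝ × ℝ => φ q.1 q.2) q) :=
      (hs.fderiv_right (m := (⊤ : ℕ∞)) le_rfl).continuous
    exact (ContinuousLinearMap.apply ℝ ℝ ((1:ℝ), (0:ℝ))).continuous.comp h1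
  have hDη : ∀ x, D c x = η x := fun x => (hDd c x).unique (hη x)
  -- second x-derivative from the profile equation
  have heq' : ∀ s x, deriv (deriv (φ s)) x =
      (1 - s^2) * φ s x - (p : ℝ) * Real.log (φ s x) * φ s x := by
    intro s x; have := heq s x; linarith
  -- Part A : the key identity via the two-parameter trick
  -- J s = ∫ (s²-c²) φc φs + p (log φs - log φc) φc φs = ∫ (φc'' φs - φc φs'') = 0
  have hJzero : ∀ s, (∫ x in (0:ℝ)..L,
      ((s^2 - c^2) * φ c x * φ s x
        + (p : ℝ) * (Real.log (φ s x) - Real.log (φ c x)) * φ c x * φ s x)) = 0 := by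
    intro s
    have hpt : ∀ x, (s^2 - c^2) * φ c x * φ s x
        + (p : ℝ) * (Real.log (φ s x) - Real.log (φ c x)) * φ c x * φ s x
        = φ s x * deriv (deriv (φ c)) x - deriv (deriv (φ s)) x * φ c x := by
      intro x; rw [heq' s x, heq' c x]; ring
    calc (∫ x in (0:ℝ)..L,
        ((s^2 - c^2) * φ c x * φ s x
          + (p : ℝ) * (Real.log (φ s x) - Real.log (φ c x)) * φ c x * φ s x))
        = ∫ x in (0:ℝ)..L, (φ s x * deriv (deriv (φ c)) x - deriv (deriv (φ s)) x * φ c x) := by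
          exact intervalIntegral.integral_congr fun x _ => hpt x
      _ = 0 := ibp_periodic ((hφs s).of_le (by simp)) ((hφs c).of_le (by simp)) (hper s) (hper c)
  -- define the two-parameter integrand and differentiate under the integral
  set G : ℝ → ℝ → ℝ := fun s x =>
    (s^2 - c^2) * φ c x * φ s x
      + (p : ℝ) * (Real.log (φ s x) - Real.log (φ c x)) * φ c x * φ s x with hG
  set G' : ℝ → ℝ → ℝ := fun s x =>
    (2 * s * φ c x * φ s x + (s^2 - c^2) * φ c x * D s x)
      + ((p : ℝ) * D s x * φ c x
        + (p : ℝ) * (Real.log (φ s x) - Real.log (φ c x)) * φ c x * D s x) with hG'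
  have hGcont : Continuous fun q : ℝ × ℝ => G q.1 q.2 := by
    have h1 : Continuous fun q : ℝ × ℝ => φ c q.2 :=
      hφcont.comp (continuous_const.prodMk continuous_snd)
    have h2 : Continuous fun q : ℝ × ℝ => Real.log (φ c q.2) :=
      hlog.continuous.comp (continuous_const.prodMk continuous_snd)
    have h3 : Continuous fun q : ℝ × ℝ => Real.log (φ q.1 q.2) := hlog.continuous
    simp only [hG]
    fun_prop
  have hG'cont : Continuous fun q : ℝ × ℝ => G' q.1 q.2 := by
    have h1 : Continuous fun q : ℝ × ℝ => φ c q.2 :=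
      hφcont.comp (continuous_const.prodMk continuous_snd)
    have h2 : Continuous fun q : ℝ × ℝ => Real.log (φ c q.2) :=
      hlog.continuous.comp (continuous_const.prodMk continuous_snd)
    have h3 : Continuous fun q : ℝ × ℝ => Real.log (φ q.1 q.2) := hlog.continuous
    have h4 : ∀ q : ℝ × ℝ, φ q.1 q.2 ≠ 0 := fun q => (hpos q.1 q.2).ne'
    have h5 : Continuous fun q : ℝ × ℝ => D q.1 q.2 := hDcont
    simp only [hG']
    fun_prop
  have hGd : ∀ s x, HasDerivAt (fun t => G t x) (G' s x) s := by
    intro s x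
    have hφd := hDd s x
    have hlogd : HasDerivAt (fun t => Real.log (φ t x)) (D s x / φ s x) s :=
      HasDerivAt.log hφd (hpos s x).ne'
    have h1 : HasDerivAt (fun t : ℝ => (t^2 - c^2) * φ c x * φ t x)
        (2 * s * φ c x * φ s x + (s^2 - c^2) * φ c x * D s x) s := by
      have ha : HasDerivAt (fun t : ℝ => (t^2 - c^2) * φ c x) (2 * s * φ c x) s := by
        have := ((hasDerivAt_pow 2 s).sub_const (c^2)).mul_const (φ c x)
        simpa [mul_comm, mul_assoc, mul_left_comm] using this
      exact ha.mul hφd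
    have h2 : HasDerivAt
        (fun t : ℝ => (p : ℝ) * (Real.log (φ t x) - Real.log (φ c x)) * φ c x * φ t x)
        ((p : ℝ) * D s x * φ c x
          + (p : ℝ) * (Real.log (φ s x) - Real.log (φ c x)) * φ c x * D s x) s := by
      have hb : HasDerivAt
          (fun t : ℝ => (p : ℝ) * (Real.log (φ t x) - Real.log (φ c x)) * φ c x)
          ((p : ℝ) * (D s x / φ s x) * φ c x) s := by
        exact (((hlogd.sub_const _).const_mul (p : ℝ)).mul_const (φ c x))
      have h2' := hb.mul hφd
      refine h2'.congr_deriv ?_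
      have hne : φ s x ≠ 0 := (hpos s x).ne'
      field_simp
    simp only [hG, hG']; exact h1.add h2
  have hmain : HasDerivAt (fun s => ∫ x in (0:ℝ)..L, G s x)
      (∫ x in (0:ℝ)..L, G' c x) c :=
    diff_under_integral 0 L hGcont hG'cont hGd c
  -- the function s ↦ ∫ G s is identically zero, so the derivative vanishes
  have hfun0 : (fun s => ∫ x in (0:ℝ)..L, G s x) = fun _ => (0:ℝ) :=
    funext fun s => hJzero s
  have hzero : (∫ x in (0:ℝ)..L, G' c x) = 0 := by
    have h0 : HasDerivAt (fun s => ∫ x in (0:ℝ)..L, G s x) 0 c := by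
      rw [hfun0]; exact hasDerivAt_const c 0
    exact hmain.unique h0
  -- simplify G' c x
  have hG'c : ∀ x, G' c x = 2 * c * (φ c x)^2 + (p : ℝ) * φ c x * η x := by
    intro x
    have hφne : φ c x ≠ 0 := (hpos c x).ne'
    simp only [hG', hDη x]
    field_simp
    ring
  have partA : (∫ x in (0:ℝ)..L, (2 * c * (φ c x)^2 + (p : ℝ) * φ c x * η x)) = 0 :=
    calc (∫ x in (0:ℝ)..L, (2 * c * (φ c x)^2 + (p : ℝ) * φ c x * η x))
        = ∫ x in (0:ℝ)..L, G' c x :=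
          intervalIntegral.integral_congr fun x _ => (hG'c x).symm
      _ = 0 := hzero
  refine ⟨partA, ?_⟩
  -- Part B : differentiate ∫ φ_s² under the integral
  have hsqd : ∀ s x, HasDerivAt (fun t => (φ t x)^2) (2 * φ s x * D s x) s := by
    intro s x
    have := ((hDd s x).mul (hDd s x))
    have h2 : HasDerivAt (fun t => φ t x * φ t x) (2 * φ s x * D s x) s := by
      refine this.congr_deriv ?_; ring
    simpa [pow_two] using h2
  have hsqcont : Continuous fun q : ℝ × ℝ => (φ q.1 q.2)^2 := by fun_prop
  have hsq'cont : Continuous fun q : ℝ × ℝ => 2 * φ q.1 q.2 * D q.1 q.2 := by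
    have := hDcont; fun_prop
  have hB : HasDerivAt (fun s => ∫ x in (0:ℝ)..L, (φ s x)^2)
      (∫ x in (0:ℝ)..L, 2 * φ c x * D c x) c :=
    diff_under_integral 0 L hsqcont hsq'cont hsqd c
  -- identify the derivative value
  have hcx : Continuous fun x => φ c x := (hφs c).continuous
  have hηx : Continuous fun x => η x := by
    have : Continuous fun x => D c x :=
      hDcont.comp (continuous_const.prodMk continuous_id)
    exact this.congr fun x => hDη x
  have hint1 : IntervalIntegrable (fun x => (φ c x)^2) volume 0 L :=
    (hcx.pow 2).intervalIntegrable 0 L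
  have hint2 : IntervalIntegrable (fun x => φ c x * η x) volume 0 L :=
    (hcx.mul hηx).intervalIntegrable 0 L
  have hsplit : (∫ x in (0:ℝ)..L, (2 * c * (φ c x)^2 + (p : ℝ) * φ c x * η x))
      = 2 * c * (∫ x in (0:ℝ)..L, (φ c x)^2) + (p : ℝ) * ∫ x in (0:ℝ)..L, φ c x * η x := by
    rw [← intervalIntegral.integral_const_mul, ← intervalIntegral.integral_const_mul,
      ← intervalIntegral.integral_add (hint1.const_mul _) (by
        have := hint2.const_mul (p : ℝ)
        exact this.congr (fun x _ => by simp only []) )]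
    exact intervalIntegral.integral_congr fun x _ => by ring
  have hpne : (p : ℝ) ≠ 0 := Nat.cast_ne_zero.mpr hp.ne'
  have hval : (∫ x in (0:ℝ)..L, 2 * φ c x * D c x)
      = -(4 * c / (p : ℝ)) * ∫ x in (0:ℝ)..L, (φ c x)^2 := by
    have h1 : (∫ x in (0:ℝ)..L, φ c x * η x)
        = -(2 * c / (p : ℝ)) * ∫ x in (0:ℝ)..L, (φ c x)^2 := by
      have := partA
      rw [hsplit] at this
      field_simp
      linarith
    calc (∫ x in (0:ℝ)..L, 2 * φ c x * D c x)
        = ∫ x in (0:ℝ)..L, 2 * (φ c x * η x) := by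
          exact intervalIntegral.integral_congr fun x _ => by rw [hDη x]; ring
      _ = 2 * ∫ x in (0:ℝ)..L, φ c x * η x := intervalIntegral.integral_const_mul 2 _
      _ = -(4 * c / (p : ℝ)) * ∫ x in (0:ℝ)..L, (φ c x)^2 := by rw [h1]; ring
  rw [hval] at hB
  exact hB
end
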